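/- arXiv:2504.14991 — 2 statements merged into one kernel-verified Lean document; each statement's English description precedes it below -/
import Mathlib

section
/- Let G be a nonempty finite index set and let w : G → ℝ be a probability vector with strictly positive entries. For all real numbers t1, t2 with 0 < t2 ≤ t1 < 1, one has (Σ_g w_g^{1-t2})^{1/t2} ≤ (Σ_g w_g^{1-t1})^{1/t1}; that is, the fairness metric f(w;t) = (Σ_g w_g^{1-t})^{1/t} is monotonically nondecreasing in t on the interval (0,1). -/
/-!
Since `w g ^ (1 - t) = w g * (w g)⁻¹ ^ t`, the quantity `(∑ g, w g ^ (1 - t)) ^ (1 / t)` is the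
weighted power mean of order `t` of the values `(w g)⁻¹` with weights `w g`, and power means are
nondecreasing in their order: for `0 < p ≤ q` this is Jensen's inequality for the convex map
`x ↦ x ^ (q / p)` applied to the values `z i ^ p`.
-/

open Finset

namespace Real

theorem rpow_mean_le_rpow_mean_of_le {ι : Type*} (s : Finset ι) (w z : ι → ℝ)
    (hw : ∀ i ∈ s, 0 ≤ w i) (hw' : ∑ i ∈ s, w i = 1) (hz : ∀ i ∈ s, 0 ≤ z i) {p q : ℝ}
    (hp : 0 < p) (hpq : p ≤ q) :
    (∑ i ∈ s, w i * z i ^ p) ^ (1 / p) ≤ (∑ i ∈ s, w i * z i ^ q) ^ (1 / q) := by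
  have hq : 0 < q := hp.trans_le hpq
  have hS : 0 ≤ ∑ i ∈ s, w i * z i ^ p :=
    sum_nonneg fun i hi => mul_nonneg (hw i hi) (rpow_nonneg (hz i hi) p)
  have jensen := rpow_arith_mean_le_arith_mean_rpow s w (fun i => z i ^ p) hw hw'
    (fun i hi => rpow_nonneg (hz i hi) p) ((one_le_div hp).2 hpq)
  have hpow : ∀ i ∈ s, w i * (z i ^ p) ^ (q / p) = w i * z i ^ q := fun i hi => by
    rw [← rpow_mul (hz i hi), mul_div_cancel₀ _ hp.ne']
  rw [sum_congr rfl hpow] at jensen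
  calc (∑ i ∈ s, w i * z i ^ p) ^ (1 / p)
      = ((∑ i ∈ s, w i * z i ^ p) ^ (q / p)) ^ (1 / q) := by
        rw [← rpow_mul hS]
        field_simp
    _ ≤ (∑ i ∈ s, w i * z i ^ q) ^ (1 / q) :=
        rpow_le_rpow (rpow_nonneg hS _) jensen (by positivity)

theorem rpow_one_sub_eq_mul_inv_rpow {x : ℝ} (hx : 0 < x) (t : ℝ) :
    x ^ (1 - t) = x * x⁻¹ ^ t := by
  rw [rpow_sub hx, rpow_one, inv_rpow hx.le, div_eq_mul_inv]

end Real

theorem fairness_metric_mono_lt_one_general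
    {G : Type*} [Fintype G] (w : G → ℝ)
    (hpos : ∀ g, 0 < w g) (hsum : ∑ g, w g = 1)
    (t1 t2 : ℝ) (ht2 : 0 < t2) (ht : t2 ≤ t1) :
    (∑ g, w g ^ ((1 : ℝ) - t2)) ^ ((1 : ℝ) / t2) ≤
      (∑ g, w g ^ ((1 : ℝ) - t1)) ^ ((1 : ℝ) / t1) := by
  simp only [Real.rpow_one_sub_eq_mul_inv_rpow (hpos _)]
  exact Real.rpow_mean_le_rpow_mean_of_le univ w (fun g => (w g)⁻¹) (fun g _ => (hpos g).le)
    hsum (fun g _ => (inv_pos.2 (hpos g)).le) ht2 ht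

/-- Monotonicity of the fairness metric on `(0, 1)`: for `0 < t2 ≤ t1 < 1`,
`(∑ g, w g ^ (1 - t2)) ^ (1 / t2) ≤ (∑ g, w g ^ (1 - t1)) ^ (1 / t1)`, i.e. the
fairness metric `f(w;t) = (∑ g, w g ^ (1-t))^(1/t)` is nondecreasing in `t` on `(0,1)`. -/
theorem fairness_metric_mono_lt_one
    {G : Type*} [Fintype G] [Nonempty G] (w : G → ℝ)
    (hpos : ∀ g, 0 < w g) (hsum : ∑ g, w g = 1)
    (t1 t2 : ℝ) (ht2 : 0 < t2) (ht : t2 ≤ t1) (ht1 : t1 < 1) :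
    (∑ g, w g ^ ((1 : ℝ) - t2)) ^ ((1 : ℝ) / t2) ≤
      (∑ g, w g ^ ((1 : ℝ) - t1)) ^ ((1 : ℝ) / t1) :=
  fairness_metric_mono_lt_one_general w hpos hsum t1 t2 ht2 ht
end

section
/- Let G be a nonempty finite index set, v : G → ℝ a vector with strictly positive entries, and t a real number with t > 1. Set S = Σ_h v_h and define the signed fairness metric f(v) = −(Σ_h (v_h/S)^{1-t})^{1/t}. Fix g ∈ G and let D_g be the partial derivative of f with respect to the coordinate v_g at the point v. Define the threshold θ = (Σ_h v_h / Σ_h v_h^{1-t})^{1/t}. Then D_g > 0 if and only if v_g < θ, D_g = 0 if and only if v_g = θ, and D_g < 0 if and only if v_g > θ. -/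
/-! By homogeneity, `f(v) = -(S ^ (t - 1) * B) ^ (1 / t)` with `S = ∑ v_h` and
`B = ∑ v_h ^ (1 - t)`, so by the chain rule `∂f/∂v_g` is a positive multiple (for `t > 1`)
of `S * v_g ^ (-t) - B`. That difference has the sign of `S / B - v_g ^ t = θ ^ t - v_g ^ t`,
hence of `θ - v_g`. -/

open Finset Function

theorem StrictMonoOn.sign_sub {α β : Type*}
    [AddCommGroup α] [LinearOrder α] [IsOrderedAddMonoid α]
    [AddCommGroup β] [LinearOrder β] [IsOrderedAddMonoid β] {f : α → β} {s : Set α}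
    (hf : StrictMonoOn f s) {a b : α} (ha : a ∈ s) (hb : b ∈ s) :
    SignType.sign (f a - f b) = SignType.sign (a - b) := by
  rcases lt_trichotomy a b with h | rfl | h
  · rw [sign_neg (sub_neg.2 (hf ha hb h)), sign_neg (sub_neg.2 h)]
  · simp
  · rw [sign_pos (sub_pos.2 (hf hb ha h)), sign_pos (sub_pos.2 h)]

theorem sign_mul_rpow_neg_sub {S B x t : ℝ} (hS : 0 ≤ S) (hB : 0 < B) (hx : 0 < x)
    (ht : 0 < t) :
    SignType.sign (S * x ^ (-t) - B) = SignType.sign ((S / B) ^ (1 / t) - x) := by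
  have hfactor : S * x ^ (-t) - B = B * (x ^ t)⁻¹ * (S / B - x ^ t) := by
    rw [Real.rpow_neg hx.le]; field_simp
  set θ := (S / B) ^ (1 / t) with hθdef
  have hθ : θ ^ t = S / B := by
    rw [hθdef, one_div, Real.rpow_inv_rpow (div_nonneg hS hB.le) ht.ne']
  rw [hfactor, sign_mul, sign_pos (by positivity), one_mul, ← hθ]
  exact (Real.strictMonoOn_rpow_Ici_of_exponent_pos ht).sign_sub
    (Set.mem_Ici.2 (by positivity)) hx.le

section

variable {G : Type*} [Fintype G]

noncomputable def fairnessMetric (t : ℝ) (w : G → ℝ) : ℝ :=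
  -(∑ h, (w h / ∑ h', w h') ^ (1 - t)) ^ (1 / t)

noncomputable def richPoorThreshold (t : ℝ) (w : G → ℝ) : ℝ :=
  ((∑ h, w h) / ∑ h, w h ^ (1 - t)) ^ (1 / t)

theorem sum_div_sum_rpow {w : G → ℝ} (hw : ∀ h, 0 ≤ w h) (p : ℝ) :
    ∑ h, (w h / ∑ h', w h') ^ p = (∑ h, w h) ^ (-p) * ∑ h, w h ^ p := by
  have hS : 0 ≤ ∑ h, w h := sum_nonneg fun h _ => hw h
  simp_rw [Real.div_rpow (hw _) hS, ← sum_div, Real.rpow_neg hS]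
  ring

theorem fairnessMetric_eq {w : G → ℝ} (hw : ∀ h, 0 ≤ w h) (t : ℝ) :
    fairnessMetric t w = -((∑ h, w h) ^ (t - 1) * ∑ h, w h ^ (1 - t)) ^ (1 / t) := by
  rw [fairnessMetric, sum_div_sum_rpow hw, neg_sub]

variable [DecidableEq G]

theorem HasDerivAt.sum_comp_update {𝕜 E : Type*} [NontriviallyNormedField 𝕜]
    [NormedAddCommGroup E] [NormedSpace 𝕜 E] {F : 𝕜 → E} {F' : E} {x : 𝕜}
    (hF : HasDerivAt F F' x) (v : G → 𝕜) (g : G) :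
    HasDerivAt (fun y => ∑ h, F (update v g y h)) F' x := by
  have hsum : ∀ y, ∑ h, F (update v g y h) = F y + ∑ h ∈ univ \ {g}, F (v h) := fun y => by
    simp_rw [apply_update (fun _ => F), sum_update_of_mem (mem_univ g)]
  simpa only [hsum] using hF.add_const _

theorem fairnessMetric_update {v : G → ℝ} (hpos : ∀ h, 0 < v h) (g : G) {x : ℝ} (hx : 0 < x)
    (t : ℝ) : fairnessMetric t (update v g x) =
      -((∑ h, update v g x h) ^ (t - 1) * ∑ h, update v g x h ^ (1 - t)) ^ (1 / t) :=
  fairnessMetric_eq ((forall_update_iff v (p := fun _ y => 0 ≤ y)).2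
    ⟨hx.le, fun h _ => (hpos h).le⟩) t

theorem hasDerivAt_fairnessMetric_update {v : G → ℝ} (hpos : ∀ h, 0 < v h) (g : G) (t : ℝ) :
    HasDerivAt (fun x => fairnessMetric t (update v g x))
      ((t - 1) / t * ((∑ h, v h) ^ (t - 1) * ∑ h, v h ^ (1 - t)) ^ (1 / t - 1) *
        (∑ h, v h) ^ (t - 2) * ((∑ h, v h) * v g ^ (-t) - ∑ h, v h ^ (1 - t))) (v g) := by
  set S := ∑ h, v h
  set B := ∑ h, v h ^ (1 - t)
  have hS : 0 < S := sum_pos (fun h _ => hpos h) ⟨g, mem_univ g⟩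
  have hB : 0 < B := sum_pos (fun h _ => Real.rpow_pos_of_pos (hpos h) _) ⟨g, mem_univ g⟩
  have hv : update v g (v g) = v := update_eq_self g v
  have hSd : HasDerivAt (fun x => ∑ h, update v g x h) 1 (v g) :=
    (hasDerivAt_id _).sum_comp_update v g
  have hBd :
      HasDerivAt (fun x => ∑ h, update v g x h ^ (1 - t)) ((1 - t) * v g ^ (-t)) (v g) := by
    simpa only [sub_sub_cancel_left] using
      (Real.hasDerivAt_rpow_const (p := 1 - t) (Or.inl (hpos g).ne')).sum_comp_update v g
  have hQd := (((hSd.rpow_const (p := t - 1) (Or.inl (by rw [hv]; exact hS.ne'))).mul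
    hBd).rpow_const (p := 1 / t) (Or.inl (by simp only [Pi.mul_apply, hv]; positivity))).neg
  have hloc : (fun x => fairnessMetric t (update v g x)) =ᶠ[nhds (v g)]
      fun x => -((∑ h, update v g x h) ^ (t - 1) * ∑ h, update v g x h ^ (1 - t)) ^ (1 / t) :=
    Filter.eventually_of_mem (Ioi_mem_nhds (hpos g)) fun _ hx => fairnessMetric_update hpos g hx t
  refine (hQd.congr_of_eventuallyEq hloc).congr_deriv ?_
  have hS1 : S ^ (t - 1) = S ^ (t - 2) * S := by
    rw [← Real.rpow_add_one hS.ne']; ring_nf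
  simp only [Pi.mul_apply, hv]
  rw [show t - 1 - 1 = t - 2 by ring, hS1]
  ring

theorem sign_deriv_fairnessMetric_update {v : G → ℝ} (hpos : ∀ h, 0 < v h) (g : G) {t D : ℝ}
    (ht : 1 < t)
    (hD : HasDerivAt (fun x => fairnessMetric t (update v g x)) D (v g)) :
    SignType.sign D = SignType.sign (richPoorThreshold t v - v g) := by
  have hS : 0 < ∑ h, v h := sum_pos (fun h _ => hpos h) ⟨g, mem_univ g⟩
  have hB : 0 < ∑ h, v h ^ (1 - t) :=
    sum_pos (fun h _ => Real.rpow_pos_of_pos (hpos h) _) ⟨g, mem_univ g⟩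
  have hK : 0 < (t - 1) / t * ((∑ h, v h) ^ (t - 1) * ∑ h, v h ^ (1 - t)) ^ (1 / t - 1) *
      (∑ h, v h) ^ (t - 2) := by
    have : 0 < (t - 1) / t := div_pos (by linarith) (by linarith)
    positivity
  rw [hD.unique (hasDerivAt_fairnessMetric_update hpos g t), sign_mul, sign_pos hK, one_mul,
    sign_mul_rpow_neg_sub hS.le hB (hpos g) (by linarith), richPoorThreshold]

end

theorem rich_poor_threshold_gt_one_general
    {G : Type*} [Fintype G] [DecidableEq G] (v : G → ℝ)
    (hpos : ∀ g, 0 < v g) (t : ℝ) (ht : 1 < t)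
    (g : G) (Dg : ℝ)
    (hD : HasDerivAt
      (fun x : ℝ =>
        -((∑ h, (Function.update v g x h / ∑ h', Function.update v g x h') ^ ((1 : ℝ) - t)) ^
          ((1 : ℝ) / t)))
      Dg (v g))
    (θ : ℝ) (hθ : θ = ((∑ h, v h) / ∑ h, v h ^ ((1 : ℝ) - t)) ^ ((1 : ℝ) / t)) :
    (0 < Dg ↔ v g < θ) ∧ (Dg = 0 ↔ v g = θ) ∧ (Dg < 0 ↔ θ < v g) := by
  have hsign : SignType.sign Dg = SignType.sign (θ - v g) :=
    hθ ▸ sign_deriv_fairnessMetric_update hpos g ht hD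
  refine ⟨?_, ?_, ?_⟩
  · rw [← sign_eq_one_iff, hsign, sign_eq_one_iff, sub_pos]
  · rw [← sign_eq_zero_iff, hsign, sign_eq_zero_iff, sub_eq_zero, eq_comm]
  · rw [← sign_eq_neg_one_iff, hsign, sign_eq_neg_one_iff, sub_neg]

/-- Rich/poor threshold for `t > 1`. Let `S = ∑ h, v h` and consider the signed
fairness metric `f(v) = -(∑ h, (v h / S) ^ (1-t)) ^ (1/t)`. Let `Dg` be the partial
derivative of `f` in the coordinate `v g` at `v`, i.e. the derivative at `x = v g`
of `x ↦ -(∑ h, (update v g x h / ∑ h', update v g x h') ^ (1-t)) ^ (1/t)`.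
With threshold `θ = (∑ h, v h / ∑ h, v h ^ (1-t)) ^ (1/t)` we have
`Dg > 0 ↔ v g < θ`, `Dg = 0 ↔ v g = θ`, and `Dg < 0 ↔ v g > θ`. -/
theorem rich_poor_threshold_gt_one
    {G : Type*} [Fintype G] [Nonempty G] [DecidableEq G] (v : G → ℝ)
    (hpos : ∀ g, 0 < v g) (t : ℝ) (ht : 1 < t)
    (S : ℝ) (hS : S = ∑ h, v h) (g : G) (Dg : ℝ)
    (hD : HasDerivAt
      (fun x : ℝ =>
        -((∑ h, (Function.update v g x h / ∑ h', Function.update v g x h') ^ ((1 : ℝ) - t)) ^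
          ((1 : ℝ) / t)))
      Dg (v g))
    (θ : ℝ) (hθ : θ = ((∑ h, v h) / ∑ h, v h ^ ((1 : ℝ) - t)) ^ ((1 : ℝ) / t)) :
    (0 < Dg ↔ v g < θ) ∧ (Dg = 0 ↔ v g = θ) ∧ (Dg < 0 ↔ θ < v g) :=
  rich_poor_threshold_gt_one_general v hpos t ht g Dg hD θ hθ
end
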